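/- Let M ∈ Sym⁺(2) (a symmetric positive definite 2×2 matrix), N a real 2×2 matrix, and α > 0. Denote by X♭ the 3×3 matrix with 2×2 upper-left block X and zeros elsewhere, and let X̂ = X♭ + e₃⊗e₃. Then ((α²M)^)^{-1/2} · (αN)♭ = (M̂)^{-1/2} · N♭, i.e. the plate bending tensor √(Î_m⁻¹)·II_m♭ is invariant under the scaling (I_m, II_m) ↦ (α²·I_m, α·II_m). Consequently, for a planar reference configuration, the bending tensor R_∞♭ of the constrained Cosserat plate model is invariant under the scaling m ↦ α·m of the midsurface deformation, while the Koiter bending tensor II_m♭ scales by the factor α. -/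

import Mathlib

open Matrix

/-- The 3×3 lift `X♭` of a 2×2 matrix `X`: upper-left block `X`, zeros elsewhere. -/
def flat (X : Matrix (Fin 2) (Fin 2) ℝ) : Matrix (Fin 3) (Fin 3) ℝ :=
  Matrix.reindex finSumFinEquiv finSumFinEquiv
    (Matrix.fromBlocks X 0 0 (0 : Matrix (Fin 1) (Fin 1) ℝ))

open scoped ComplexOrder in
/-- The positive semidefinite square root, as `Matrix.PosSemidef.sqrt` was defined in the
older Mathlib (removed since). -/
noncomputable def Matrix.PosSemidef.sqrt {n : Type*} [Fintype n] [DecidableEq n] {𝕜 : Type*}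
    [RCLike 𝕜] {A : Matrix n n 𝕜} (hA : A.PosSemidef) : Matrix n n 𝕜 :=
  (hA.1.eigenvectorUnitary : Matrix n n 𝕜) *
    diagonal (fun i => ((√(hA.1.eigenvalues i) : ℝ) : 𝕜)) *
    (star hA.1.eigenvectorUnitary : Matrix n n 𝕜)

/-- The lift `X̂ = X♭ + e₃⊗e₃`. -/
def hat (X : Matrix (Fin 2) (Fin 2) ℝ) : Matrix (Fin 3) (Fin 3) ℝ :=
  flat X + vecMulVec ![0, 0, 1] ![0, 0, 1]

/-! The square root of `M̂` is `Ŝ` for `S = √M`: the lift `X ↦ X̂` is multiplicative and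
preserves positive semidefiniteness, so `Ŝ` is a positive semidefinite square root of `M̂`.
Likewise the square root of `(α²M)^` is `(αS)^`, and then
`(αS)^⁻¹ (αN)♭ = ((αS)⁻¹ αN)♭ = (S⁻¹N)♭ = Ŝ⁻¹ N♭`. -/

open scoped MatrixOrder ComplexOrder

lemma Matrix.PosSemidef.sqrt_eq_cfcSqrt {n 𝕜 : Type*} [Fintype n] [DecidableEq n] [RCLike 𝕜]
    {A : Matrix n n 𝕜} (hA : A.PosSemidef) : hA.sqrt = CFC.sqrt A := by
  rw [CFC.sqrt_eq_real_sqrt A hA.nonneg, cfcₙ_eq_cfc, hA.1.cfc_eq, IsHermitian.cfc,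
    Unitary.conjStarAlgAut_apply, Matrix.PosSemidef.sqrt]
  rfl

lemma CFC.sqrt_sq_smul {A : Type*} [Ring A] [StarRing A] [TopologicalSpace A] [Algebra ℝ A]
    [PartialOrder A] [StarOrderedRing A] [ContinuousFunctionalCalculus ℝ A IsSelfAdjoint]
    [NonnegSpectrumClass ℝ A] [IsTopologicalRing A] [T2Space A] [PosSMulMono ℝ A]
    {a : A} (ha : 0 ≤ a) {c : ℝ} (hc : 0 ≤ c) :
    CFC.sqrt (c ^ 2 • a) = c • CFC.sqrt a := by
  rw [CFC.sqrt_eq_iff _ _ (by positivity) (smul_nonneg hc (CFC.sqrt_nonneg a)), smul_mul_smul,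
    CFC.sqrt_mul_sqrt_self a, sq]

lemma flat_smul (a : ℝ) (X : Matrix (Fin 2) (Fin 2) ℝ) : flat (a • X) = a • flat X := by
  have hblocks : fromBlocks (a • X) 0 0 (0 : Matrix (Fin 1) (Fin 1) ℝ) =
      a • fromBlocks X 0 0 0 := by
    simp [fromBlocks_smul]
  rw [flat, flat, hblocks]
  rfl

lemma hat_eq_reindex (X : Matrix (Fin 2) (Fin 2) ℝ) :
    hat X = reindex finSumFinEquiv finSumFinEquiv
      (fromBlocks X 0 0 (1 : Matrix (Fin 1) (Fin 1) ℝ)) := by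
  ext i j
  fin_cases i <;> fin_cases j <;>
    simp [hat, flat, show finSumFinEquiv.symm (2 : Fin 3) = Sum.inr (0 : Fin 1) from rfl] <;> rfl

lemma hat_mul_hat (A B : Matrix (Fin 2) (Fin 2) ℝ) : hat A * hat B = hat (A * B) := by
  simp [hat_eq_reindex, submatrix_mul_equiv, fromBlocks_multiply]

lemma hat_mul_flat (A B : Matrix (Fin 2) (Fin 2) ℝ) : hat A * flat B = flat (A * B) := by
  simp [hat_eq_reindex, flat, submatrix_mul_equiv, fromBlocks_multiply]

lemma hat_one : hat (1 : Matrix (Fin 2) (Fin 2) ℝ) = 1 := by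
  simp [hat_eq_reindex, fromBlocks_one]

lemma inv_hat_mul_flat {A : Matrix (Fin 2) (Fin 2) ℝ} (hA : IsUnit A.det)
    (B : Matrix (Fin 2) (Fin 2) ℝ) : (hat A)⁻¹ * flat B = flat (A⁻¹ * B) := by
  rw [inv_eq_left_inv (by rw [hat_mul_hat, nonsing_inv_mul _ hA, hat_one]), hat_mul_flat]

lemma inv_hat_smul_mul_flat_smul {A : Matrix (Fin 2) (Fin 2) ℝ} (hA : IsUnit A.det) {c : ℝ}
    (hc : c ≠ 0) (B : Matrix (Fin 2) (Fin 2) ℝ) :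
    (hat (c • A))⁻¹ * flat (c • B) = (hat A)⁻¹ * flat B := by
  have hcA : IsUnit (c • A).det := by
    rw [det_smul]
    exact ((IsUnit.mk0 c hc).pow _).mul hA
  have hinv : (c • A)⁻¹ = c⁻¹ • A⁻¹ :=
    inv_eq_left_inv (by rw [smul_mul_smul, nonsing_inv_mul _ hA, inv_mul_cancel₀ hc, one_smul])
  rw [inv_hat_mul_flat hcA, inv_hat_mul_flat hA, hinv, smul_mul_smul, inv_mul_cancel₀ hc,
    one_smul]

lemma posSemidef_hat {A : Matrix (Fin 2) (Fin 2) ℝ} (hA : A.PosSemidef) :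
    (hat A).PosSemidef := by
  rw [hat_eq_reindex, reindex_apply, posSemidef_submatrix_equiv, ← conjTranspose_zero]
  let _ : Invertible (1 : Matrix (Fin 1) (Fin 1) ℝ) := invertibleOne
  exact (PosDef.fromBlocks₂₂ A (0 : Matrix (Fin 2) (Fin 1) ℝ) PosDef.one).2
    (by simpa using hA)

lemma Matrix.PosSemidef.sqrt_hat {A : Matrix (Fin 2) (Fin 2) ℝ} (h : (hat A).PosSemidef)
    (hA : A.PosSemidef) : h.sqrt = hat (CFC.sqrt A) := by
  have hroot : (hat (CFC.sqrt A)).PosSemidef := posSemidef_hat (CFC.sqrt_nonneg A).posSemidef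
  rw [h.sqrt_eq_cfcSqrt, CFC.sqrt_eq_iff _ _ h.nonneg hroot.nonneg, hat_mul_hat,
    CFC.sqrt_mul_sqrt_self A hA.nonneg]

/-- scaling invariance of the plate bending tensor: for `M ∈ Sym⁺(2)`,
`N` a 2×2 matrix and `α > 0`,
`((α²M)^)^{-1/2}·(αN)♭ = (M̂)^{-1/2}·N♭`, i.e. `√(Î_m⁻¹)·II_m♭` is invariant under
`(I_m, II_m) ↦ (α² I_m, α II_m)`; the Koiter bending tensor scales by `α`:
`(αN)♭ = α·N♭`. -/
theorem plate_bending_scaling_invariance (M N : Matrix (Fin 2) (Fin 2) ℝ)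
    (hM : M.PosDef) (α : ℝ) (hα : 0 < α) :
    (∀ (h1 : (hat (α ^ 2 • M)).PosSemidef) (h2 : (hat M).PosSemidef),
      (h1.sqrt)⁻¹ * flat (α • N) = (h2.sqrt)⁻¹ * flat N) ∧
    flat (α • N) = α • flat N := by
  refine ⟨fun h1 h2 => ?_, flat_smul α N⟩
  have hS : IsUnit (CFC.sqrt M).det := (isUnit_iff_isUnit_det _).1 <|
    (CFC.isUnit_sqrt_iff M hM.posSemidef.nonneg).2 hM.isUnit
  rw [h1.sqrt_hat (hM.posSemidef.smul (sq_nonneg α)), h2.sqrt_hat hM.posSemidef,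
    CFC.sqrt_sq_smul hM.posSemidef.nonneg hα.le, inv_hat_smul_mul_flat_smul hS hα.ne']
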